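/- arXiv:math/0409382 — 5 statements merged into one kernel-verified Lean document; each statement's English description precedes it below -/
import Mathlib

section
/- Let n ≥ 1 and let K = ℚ(X_0,…,X_{n−1},Y_1,…,Y_n) be the rational function field in the 2n indicated variables. For every subset J ⊆ {1,…,n−1}: W_{n,J}(X_0^{−1},…,X_{n−1}^{−1}, Y_1^{−1},…,Y_n^{−1}) = (−1)^{|J|+1} · Σ_{S⊆J} W_{n,S}(X,Y). -/
/-!
With `Z̲ := Z / (1 - Z)`, every variable satisfies `(Z⁻¹)̲ = -1 - Z̲`, so the claim is a polynomial
identity in the `X̲ i`, `Y̲ i`. It follows by induction on `J`, adding its largest element `m < n`: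
then `W_{n, J ∪ {m}} = X̲_m W_{n,J} + (∏_{i ∈ J} Y̲_i) (Y̲_m (1 + Y̲_n) + X̲_m (Y̲_m - Y̲_n))`,
and `∏_{i ∈ J} (-1 - Y̲_i) = (-1)^|J| ∑_{S ⊆ J} ∏_{i ∈ S} Y̲_i`.
-/

/-- The rational expression `W_{n,I}(X,Y)` over a field, with `Z̲ := Z/(1-Z)`. -/
noncomputable def Wrat {K : Type*} [Field K] (n : ℕ) (I : Finset ℕ) (X Y : ℕ → K) : K :=
  (X 0 / (1 - X 0)) * ∏ i ∈ I, X i / (1 - X i)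
  + (Y n / (1 - Y n)) * ∏ i ∈ I, Y i / (1 - Y i)
  + ∑ j ∈ I, (∏ i ∈ I.filter (· ≤ j), Y i / (1 - Y i)) *
      ∏ i ∈ I.filter (fun i => j ≤ i), X i / (1 - X i)
  + ∑ j ∈ insert n I, (∏ i ∈ I.filter (· < j), Y i / (1 - Y i)) *
      ∏ i ∈ I.filter (fun i => j ≤ i), X i / (1 - X i)

/-- The rational function field ℚ(X_0,…,X_{n−1},Y_1,…,Y_n) in 2n variables. -/
abbrev KXY (n : ℕ) := FractionRing (MvPolynomial (Fin n ⊕ Fin n) ℚ)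

/-- The variable X_i (0 ≤ i ≤ n−1) of ℚ(X_0,…,X_{n−1},Y_1,…,Y_n); junk value 1 outside range. -/
noncomputable def Xvar (n : ℕ) (i : ℕ) : KXY n :=
  if h : i < n then algebraMap (MvPolynomial (Fin n ⊕ Fin n) ℚ) (KXY n)
    (MvPolynomial.X (Sum.inl ⟨i, h⟩)) else 1

/-- The variable Y_i (1 ≤ i ≤ n) of ℚ(X_0,…,X_{n−1},Y_1,…,Y_n); junk value 1 outside range. -/
noncomputable def Yvar (n : ℕ) (i : ℕ) : KXY n :=
  if h : 1 ≤ i ∧ i ≤ n then algebraMap (MvPolynomial (Fin n ⊕ Fin n) ℚ) (KXY n)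
    (MvPolynomial.X (Sum.inr ⟨i - 1, by omega⟩)) else 1

open Finset

section Wpoly

variable {K : Type*} [CommRing K]

def Wpoly (n : ℕ) (I : Finset ℕ) (f g : ℕ → K) : K :=
  f 0 * ∏ i ∈ I, f i
  + g n * ∏ i ∈ I, g i
  + ∑ j ∈ I, (∏ i ∈ I.filter (· ≤ j), g i) * ∏ i ∈ I.filter (fun i => j ≤ i), f i
  + ∑ j ∈ insert n I, (∏ i ∈ I.filter (· < j), g i) * ∏ i ∈ I.filter (fun i => j ≤ i), f i

theorem Wrat_eq_Wpoly {F : Type*} [Field F] (n : ℕ) (I : Finset ℕ) (X Y : ℕ → F) :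
    Wrat n I X Y = Wpoly n I (fun i => X i / (1 - X i)) (fun i => Y i / (1 - Y i)) :=
  rfl

theorem Wpoly_congr {n : ℕ} {I : Finset ℕ} {f f' g g' : ℕ → K}
    (hf : ∀ i ∈ insert 0 I, f i = f' i) (hg : ∀ i ∈ insert n I, g i = g' i) :
    Wpoly n I f g = Wpoly n I f' g' := by
  have hfI : ∀ i ∈ I, f i = f' i := fun i hi => hf i (mem_insert_of_mem hi)
  have hgI : ∀ i ∈ I, g i = g' i := fun i hi => hg i (mem_insert_of_mem hi)
  have hfp (p : ℕ → Prop) [DecidablePred p] : ∏ i ∈ I.filter p, f i = ∏ i ∈ I.filter p, f' i :=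
    prod_congr rfl fun i hi => hfI i (mem_filter.1 hi).1
  have hgp (p : ℕ → Prop) [DecidablePred p] : ∏ i ∈ I.filter p, g i = ∏ i ∈ I.filter p, g' i :=
    prod_congr rfl fun i hi => hgI i (mem_filter.1 hi).1
  simp only [Wpoly, hf 0 (mem_insert_self _ _), hg n (mem_insert_self _ _), prod_congr rfl hfI,
    prod_congr rfl hgI, hfp, hgp]

variable {m : ℕ} {S : Finset ℕ}

theorem sum_prod_filter_insert_max (hS : ∀ i ∈ S, i < m) (p : ℕ → ℕ → Prop)
    [∀ j, DecidablePred (p j)] (hp : ∀ j ∈ S, ¬p j m) (f g : ℕ → K) :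
    ∑ j ∈ S, (∏ i ∈ (insert m S).filter (p j), g i) *
        ∏ i ∈ (insert m S).filter (fun i => j ≤ i), f i
      = f m * ∑ j ∈ S, (∏ i ∈ S.filter (p j), g i) * ∏ i ∈ S.filter (fun i => j ≤ i), f i := by
  have hmS : m ∉ S := fun h => (hS m h).false
  rw [mul_sum]
  refine sum_congr rfl fun j hj => ?_
  rw [filter_insert, if_neg (hp j hj), filter_insert, if_pos (hS j hj).le,
    prod_insert fun h => hmS (mem_filter.1 h).1]
  ring

theorem sum_prod_filter_le_insert_max (hS : ∀ i ∈ S, i < m) (f g : ℕ → K) :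
    ∑ j ∈ insert m S, (∏ i ∈ (insert m S).filter (· ≤ j), g i) *
        ∏ i ∈ (insert m S).filter (fun i => j ≤ i), f i
      = g m * f m * ∏ i ∈ S, g i +
        f m * ∑ j ∈ S, (∏ i ∈ S.filter (· ≤ j), g i) * ∏ i ∈ S.filter (fun i => j ≤ i), f i := by
  have hmS : m ∉ S := fun h => (hS m h).false
  have hle : S.filter (· ≤ m) = S := filter_true_of_mem fun i hi => (hS i hi).le
  have hge : S.filter (m ≤ ·) = ∅ := filter_false_of_mem fun i hi => (hS i hi).not_ge
  rw [sum_insert hmS, sum_prod_filter_insert_max hS (fun j i => i ≤ j)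
    (fun j hj => (hS j hj).not_ge)]
  simp only [filter_insert, le_refl, if_true, hle, hge, prod_insert hmS, insert_empty,
    prod_singleton]
  ring

theorem sum_prod_filter_lt_insert_max {n : ℕ} (hmn : m < n) (hS : ∀ i ∈ S, i < m)
    (f g : ℕ → K) :
    ∑ j ∈ insert n (insert m S), (∏ i ∈ (insert m S).filter (· < j), g i) *
        ∏ i ∈ (insert m S).filter (fun i => j ≤ i), f i
      = g m * ∏ i ∈ S, g i +
        f m * ∑ j ∈ insert n S, (∏ i ∈ S.filter (· < j), g i) *
          ∏ i ∈ S.filter (fun i => j ≤ i), f i := by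
  have hmS : m ∉ S := fun h => (hS m h).false
  have hnS : n ∉ S := fun h => (hS n h).not_gt hmn
  have hlt : S.filter (· < m) = S := filter_true_of_mem hS
  have hge : S.filter (m ≤ ·) = ∅ := filter_false_of_mem fun i hi => (hS i hi).not_ge
  have hltn : S.filter (· < n) = S := filter_true_of_mem fun i hi => (hS i hi).trans hmn
  have hgen : S.filter (n ≤ ·) = ∅ :=
    filter_false_of_mem fun i hi => ((hS i hi).trans hmn).not_ge
  rw [sum_insert (by simp [hmn.ne', hnS]), sum_insert hmS, sum_insert hnS,
    sum_prod_filter_insert_max hS (fun j i => i < j) (fun j hj => (hS j hj).not_gt)]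
  simp only [filter_insert, hmn, hmn.not_ge, le_refl, lt_irrefl, if_true, if_false, hlt, hge,
    hltn, hgen, prod_insert hmS, prod_empty, insert_empty, prod_singleton]
  ring

theorem Wpoly_insert_max {n : ℕ} (hmn : m < n) (hS : ∀ i ∈ S, i < m) (f g : ℕ → K) :
    Wpoly n (insert m S) f g
      = f m * Wpoly n S f g + (∏ i ∈ S, g i) * (g m * (1 + g n) + f m * (g m - g n)) := by
  have hmS : m ∉ S := fun h => (hS m h).false
  rw [Wpoly, Wpoly, prod_insert hmS, prod_insert hmS, sum_prod_filter_le_insert_max hS,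
    sum_prod_filter_lt_insert_max hmn hS]
  ring

theorem prod_neg_one_sub {ι : Type*} (s : Finset ι) (g : ι → K) :
    ∏ i ∈ s, (-1 - g i) = (-1) ^ s.card * ∑ t ∈ s.powerset, ∏ i ∈ t, g i := by
  rw [← prod_one_add, ← prod_const, ← prod_mul_distrib]
  exact prod_congr rfl fun i _ => by ring

theorem Wpoly_neg_one_sub {n : ℕ} {J : Finset ℕ} (hJ : ∀ i ∈ J, i < n) (f g : ℕ → K) :
    Wpoly n J (fun i => -1 - f i) (fun i => -1 - g i)
      = (-1) ^ (J.card + 1) * ∑ S ∈ J.powerset, Wpoly n S f g := by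
  induction J using Finset.induction_on_max with
  | empty =>
    simp only [Wpoly, prod_empty, filter_empty, sum_empty, insert_empty, sum_singleton,
      powerset_empty, card_empty]
    ring
  | insert m S hS ih =>
    have hmS : m ∉ S := fun h => (hS m h).false
    have hmn : m < n := hJ m (mem_insert_self _ _)
    rw [Wpoly_insert_max hmn hS, ih (fun i hi => hJ i (mem_insert_of_mem hi)),
      prod_neg_one_sub, card_insert_of_notMem hmS, sum_powerset_insert hmS,
      sum_congr rfl fun T hT => Wpoly_insert_max hmn (fun i hi => hS i (mem_powerset.1 hT hi)) f g,
      sum_add_distrib, ← mul_sum, ← sum_mul]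
    ring

end Wpoly

theorem inv_div_one_sub_inv {F : Type*} [Field F] {a : F} (h0 : a ≠ 0) (h1 : a ≠ 1) :
    a⁻¹ / (1 - a⁻¹) = -1 - a / (1 - a) := by
  have h1' : 1 - a ≠ 0 := sub_ne_zero.2 h1.symm
  field_simp
  ring

theorem algebraMap_X_ne_zero_fractionRing {σ R : Type*} [CommRing R] [Nontrivial R] (s : σ) :
    algebraMap (MvPolynomial σ R) (FractionRing (MvPolynomial σ R)) (MvPolynomial.X s) ≠ 0 :=
  (map_ne_zero_iff _ (IsFractionRing.injective _ _)).2 (MvPolynomial.X_ne_zero s)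

theorem algebraMap_X_ne_one_fractionRing {σ R : Type*} [CommRing R] [Nontrivial R] (s : σ) :
    algebraMap (MvPolynomial σ R) (FractionRing (MvPolynomial σ R)) (MvPolynomial.X s) ≠ 1 := by
  rw [← map_one (algebraMap (MvPolynomial σ R) _), Ne, (IsFractionRing.injective _ _).eq_iff]
  intro h
  simpa using congrArg MvPolynomial.constantCoeff h

theorem Xvar_inv_div_one_sub_inv {n i : ℕ} (hi : i < n) :
    (Xvar n i)⁻¹ / (1 - (Xvar n i)⁻¹) = -1 - Xvar n i / (1 - Xvar n i) := by
  rw [Xvar, dif_pos hi]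
  exact inv_div_one_sub_inv (algebraMap_X_ne_zero_fractionRing _)
    (algebraMap_X_ne_one_fractionRing _)

theorem Yvar_inv_div_one_sub_inv {n i : ℕ} (h1 : 1 ≤ i) (hn : i ≤ n) :
    (Yvar n i)⁻¹ / (1 - (Yvar n i)⁻¹) = -1 - Yvar n i / (1 - Yvar n i) := by
  rw [Yvar, dif_pos ⟨h1, hn⟩]
  exact inv_div_one_sub_inv (algebraMap_X_ne_zero_fractionRing _)
    (algebraMap_X_ne_one_fractionRing _)

theorem W_inversion_lemma (n : ℕ) (hn : 1 ≤ n) (J : Finset ℕ)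
    (hJ : J ⊆ Finset.Icc 1 (n - 1)) :
    Wrat n J (fun i => (Xvar n i)⁻¹) (fun i => (Yvar n i)⁻¹) =
      (-1) ^ (J.card + 1) * ∑ S ∈ J.powerset, Wrat n S (Xvar n) (Yvar n) := by
  have hJ' : ∀ i ∈ J, 1 ≤ i ∧ i < n := fun i hi => by
    have := mem_Icc.1 (hJ hi)
    omega
  simp only [Wrat_eq_Wpoly]
  rw [Wpoly_congr (f' := fun i => -1 - Xvar n i / (1 - Xvar n i))
    (g' := fun i => -1 - Yvar n i / (1 - Yvar n i)), Wpoly_neg_one_sub fun i hi => (hJ' i hi).2]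
  · simp only [forall_mem_insert]
    exact ⟨Xvar_inv_div_one_sub_inv hn, fun i hi => Xvar_inv_div_one_sub_inv (hJ' i hi).2⟩
  · simp only [forall_mem_insert]
    exact ⟨Yvar_inv_div_one_sub_inv hn le_rfl,
      fun i hi => Yvar_inv_div_one_sub_inv (hJ' i hi).1 (hJ' i hi).2.le⟩
end

section
/- Let n ≥ 1 and let K = ℚ(X_0,…,X_{n−1},Y_1,…,Y_n) be the rational function field in the 2n indicated variables. For every subset I ⊆ {1,…,n−1}: Σ_{J⊆{1,…,n−1}, J⊇I} W_{n,J}(X_0^{−1},…,X_{n−1}^{−1}, Y_1^{−1},…,Y_n^{−1}) = (−1)^n · Σ_{J⊆{1,…,n−1}, J⊇I^c} W_{n,J}(X,Y), where I^c := {1,…,n−1} \ I. -/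
/-!
Write `x = X̲` and `y = Y̲`. For `J` below `n`, merging the two sums of `W_{n,J}` term by term gives
`W_{n,J} = x₀ ∏_J x + (1 + yₙ) ∏_J y + ∑_{j ∈ J} xⱼ (1 + yⱼ) ∏_{i < j} yᵢ ∏_{i > j} xᵢ`.
For `k ∈ J` each term has exactly one factor among `xₖ`, `yₖ` and the weight `xₖ (1 + yₖ)`, so
summing over `J ⊇ I` turns the factors `xᵢ, yᵢ` with `i ∉ I` into `1 + xᵢ, 1 + yᵢ` and keeps the
weights. Inverting a variable sends `Z̲` to `-(1 + Z̲)`: the factors become minus those of the sum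
over `J ⊇ Iᶜ`, and the weights become `(1 + xⱼ) yⱼ = xⱼ (1 + yⱼ) + (yⱼ - xⱼ)`. The surplus is
absorbed by the telescoping identity `∑ⱼ (dⱼ - cⱼ) ∏_{i < j} dᵢ ∏_{i > j} cᵢ = ∏ d - ∏ c` for the
factors `c` (of `x`) and `d` (of `y`).
-/

open Finset

section CutSum

variable {ι M R : Type*} [LinearOrder ι] [CommMonoid M] [CommRing R]

lemma card_filter_lt_add_card_filter_gt {s : Finset ι} {j : ι} (hj : j ∈ s) :
    #{i ∈ s | i < j} + #{i ∈ s | j < i} + 1 = #s := by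
  rw [← card_erase_add_one hj, ← card_filter_add_card_filter_not (s := s.erase j) (· < j)]
  congr 3 <;> ext i <;> simp only [mem_filter, mem_erase, not_lt] <;> grind

lemma prod_filter_le_of_mem {s : Finset ι} {j : ι} (hj : j ∈ s) (f : ι → M) :
    ∏ i ∈ s with i ≤ j, f i = f j * ∏ i ∈ s with i < j, f i := by
  rw [← mul_prod_erase _ f (mem_filter.2 ⟨hj, le_rfl⟩ : j ∈ s.filter (· ≤ j))]
  congr 2
  ext i
  simp only [mem_erase, mem_filter]
  grind

lemma prod_filter_ge_of_mem {s : Finset ι} {j : ι} (hj : j ∈ s) (f : ι → M) :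
    ∏ i ∈ s with j ≤ i, f i = f j * ∏ i ∈ s with j < i, f i := by
  rw [← mul_prod_erase _ f (mem_filter.2 ⟨hj, le_rfl⟩ : j ∈ s.filter (j ≤ ·))]
  congr 2
  ext i
  simp only [mem_erase, mem_filter]
  grind

def cutSum (s : Finset ι) (c d w : ι → R) : R :=
  ∑ j ∈ s, w j * (∏ i ∈ s with i < j, d i) * ∏ i ∈ s with j < i, c i

lemma cutSum_congr {s : Finset ι} {c d w c' d' w' : ι → R} (hc : ∀ i ∈ s, c i = c' i)
    (hd : ∀ i ∈ s, d i = d' i) (hw : ∀ i ∈ s, w i = w' i) :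
    cutSum s c d w = cutSum s c' d' w' :=
  sum_congr rfl fun j hj => by
    rw [hw j hj, prod_congr rfl fun i hi => hd i (mem_filter.1 hi).1,
      prod_congr rfl fun i hi => hc i (mem_filter.1 hi).1]

lemma cutSum_add (s : Finset ι) (c d w v : ι → R) :
    cutSum s c d (fun i => w i + v i) = cutSum s c d w + cutSum s c d v := by
  simp only [cutSum, add_mul, sum_add_distrib]

lemma cutSum_sub_eq_prod_sub_prod (s : Finset ι) (c d : ι → R) :
    cutSum s c d (fun i => d i - c i) = ∏ i ∈ s, d i - ∏ i ∈ s, c i := by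
  have h := prod_add_ordered s c fun i => d i - c i
  simp only [add_sub_cancel] at h
  rw [h, add_sub_cancel_left, cutSum]

lemma cutSum_neg (s : Finset ι) (c d w : ι → R) :
    cutSum s (fun i => -c i) (fun i => -d i) w = -(-1) ^ #s * cutSum s c d w := by
  rw [cutSum, cutSum, mul_sum]
  refine sum_congr rfl fun j hj => ?_
  simp only [prod_neg, ← card_filter_lt_add_card_filter_gt hj, pow_succ, pow_add]
  ring

lemma cutSum_insert {s : Finset ι} {k : ι} (hk : k ∉ s) (c d w : ι → R) :
    cutSum (insert k s) c d w =
      w k * (∏ i ∈ s with i < k, d i) * (∏ i ∈ s with k < i, c i) +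
        cutSum s c d fun j => (if k < j then d k else c k) * w j := by
  rw [cutSum, sum_insert hk, filter_insert, if_neg (lt_irrefl k), filter_insert,
    if_neg (lt_irrefl k), cutSum]
  congr 1
  refine sum_congr rfl fun j hj => ?_
  rcases (ne_of_mem_of_not_mem hj hk).lt_or_gt with hjk | hkj
  · simp only [filter_insert, hjk, hjk.not_gt, if_true, if_false, prod_insert (notMem_mono (filter_subset _ s) hk)]
    ring
  · simp only [filter_insert, hkj, hkj.not_gt, if_true, if_false, prod_insert (notMem_mono (filter_subset _ s) hk)]
    ring

def wForm (A B : R) (s : Finset ι) (c d w : ι → R) : R :=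
  A * ∏ i ∈ s, c i + B * ∏ i ∈ s, d i + cutSum s c d w

lemma wForm_insert_update {s : Finset ι} {k : ι} (hk : k ∉ s) (A B : R) (c d w : ι → R) :
    wForm A B (insert k s) (Function.update c k (1 + c k)) (Function.update d k (1 + d k)) w =
      wForm A B s c d w + wForm A B (insert k s) c d w := by
  simp only [wForm, cutSum_insert hk, prod_insert hk, Function.update_self,
    prod_update_of_notMem hk, prod_update_of_notMem (notMem_mono (filter_subset _ s) hk)]
  rw [cutSum_congr (c' := c) (d' := d) (w' := fun j => w j + (if k < j then d k else c k) * w j),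
    cutSum_add]
  · ring
  · exact fun i hi => Function.update_of_ne (ne_of_mem_of_not_mem hi hk) _ _
  · exact fun i hi => Function.update_of_ne (ne_of_mem_of_not_mem hi hk) _ _
  · intro i _
    split_ifs <;> ring

lemma sum_powerset_wForm (A B : R) (c d w : ι → R) {I U : Finset ι} (h : Disjoint I U) :
    ∑ T ∈ U.powerset, wForm A B (I ∪ T) c d w =
      wForm A B (I ∪ U) (fun i => if i ∈ U then 1 + c i else c i)
        (fun i => if i ∈ U then 1 + d i else d i) w := by
  induction U using Finset.induction_on generalizing I with
  | empty =>
    simp only [powerset_empty, sum_singleton, notMem_empty, if_false]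
  | @insert k U hk ih =>
    have hkI : k ∉ I := disjoint_right.1 h (mem_insert_self k U)
    have hkIU : k ∉ I ∪ U := by simp [hkI, hk]
    have hupdate : ∀ f : ι → R, (fun i => if i ∈ insert k U then 1 + f i else f i) =
        Function.update (fun i => if i ∈ U then 1 + f i else f i) k
          (1 + (fun i => if i ∈ U then 1 + f i else f i) k) := by
      intro f
      ext i
      by_cases hik : i = k
      · subst hik; simp [hk]
      · simp [hik]
    rw [sum_powerset_insert hk, ih (disjoint_of_subset_right (subset_insert k U) h)]
    simp only [union_insert, ← insert_union]
    rw [ih (disjoint_insert_left.2 ⟨hk, disjoint_of_subset_right (subset_insert k U) h⟩),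
      hupdate, hupdate, insert_union, wForm_insert_update hkIU]

lemma sum_superset_wForm (A B : R) (c d w : ι → R) {I S : Finset ι} (hI : I ⊆ S) :
    ∑ J ∈ S.powerset.filter (fun J => I ⊆ J), wForm A B J c d w =
      wForm A B S (fun i => if i ∈ S \ I then 1 + c i else c i)
        (fun i => if i ∈ S \ I then 1 + d i else d i) w := by
  have hdisj : ∀ T ∈ (S \ I).powerset, Disjoint I T := fun T hT =>
    disjoint_of_subset_right (mem_powerset.1 hT) disjoint_sdiff
  have hinj : Set.InjOn (I ∪ ·) ((S \ I).powerset : Set (Finset ι)) := fun T hT T' hT' h => by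
    rw [← union_sdiff_cancel_left (hdisj T hT), ← union_sdiff_cancel_left (hdisj T' hT')]
    exact congrArg (· \ I) h
  rw [← Icc_eq_filter_powerset, Icc_eq_image_powerset hI, sum_image hinj,
    sum_powerset_wForm A B c d w disjoint_sdiff, union_sdiff_of_subset hI]

lemma wForm_neg_factors {A B A' B' : R} {s : Finset ι} {c d w c' d' w' : ι → R}
    (hA : A' = -(1 + A)) (hB : B' = 1 - B) (hc : ∀ i ∈ s, c' i = -c i)
    (hd : ∀ i ∈ s, d' i = -d i) (hw : ∀ i ∈ s, w' i = w i + (d i - c i)) :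
    wForm A' B' s c' d' w' = -(-1) ^ #s * wForm A B s c d w := by
  rw [wForm, cutSum_congr hc hd hw, prod_congr rfl hc, prod_congr rfl hd, prod_neg, prod_neg,
    cutSum_neg, cutSum_add, cutSum_sub_eq_prod_sub_prod, wForm, hA, hB]
  ring

end CutSum

section Field

variable {K : Type*} [Field K]

def underline (z : K) : K := z / (1 - z)

lemma underline_inv {z : K} (h0 : z ≠ 0) (h1 : z ≠ 1) : underline z⁻¹ = -(1 + underline z) := by
  have : 1 - z ≠ 0 := sub_ne_zero.2 h1.symm
  have : z - 1 ≠ 0 := sub_ne_zero.2 h1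
  simp only [underline]
  field_simp
  ring

lemma Wrat_eq_wForm {n : ℕ} {J : Finset ℕ} (hJ : ∀ i ∈ J, i < n) (X Y : ℕ → K) :
    Wrat n J X Y = wForm (underline (X 0)) (1 + underline (Y n)) J (fun i => underline (X i))
      (fun i => underline (Y i)) (fun j => underline (X j) * (1 + underline (Y j))) := by
  have hnJ : n ∉ J := fun h => lt_irrefl n (hJ n h)
  rw [Wrat, sum_insert hnJ, filter_true_of_mem hJ,
    filter_false_of_mem fun i hi => not_le.2 (hJ i hi), prod_empty, mul_one]
  have hterm : ∀ j ∈ J,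
      (∏ i ∈ J with i ≤ j, Y i / (1 - Y i)) * (∏ i ∈ J with j ≤ i, X i / (1 - X i)) +
        (∏ i ∈ J with i < j, Y i / (1 - Y i)) * (∏ i ∈ J with j ≤ i, X i / (1 - X i)) =
      X j / (1 - X j) * (1 + Y j / (1 - Y j)) * (∏ i ∈ J with i < j, Y i / (1 - Y i)) *
        ∏ i ∈ J with j < i, X i / (1 - X i) := fun j hj => by
    rw [prod_filter_le_of_mem hj, prod_filter_ge_of_mem hj]
    ring
  simp only [wForm, cutSum, underline]
  rw [← sum_congr rfl hterm, sum_add_distrib]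
  ring

lemma sum_superset_Wrat {n : ℕ} {I S : Finset ℕ} (hS : ∀ i ∈ S, i < n) (hI : I ⊆ S)
    (X Y : ℕ → K) :
    ∑ J ∈ S.powerset.filter (fun J => I ⊆ J), Wrat n J X Y =
      wForm (underline (X 0)) (1 + underline (Y n)) S
        (fun i => if i ∈ S \ I then 1 + underline (X i) else underline (X i))
        (fun i => if i ∈ S \ I then 1 + underline (Y i) else underline (Y i))
        (fun j => underline (X j) * (1 + underline (Y j))) := by
  rw [← sum_superset_wForm _ _ _ _ _ hI]
  exact sum_congr rfl fun J hJ =>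
    Wrat_eq_wForm (fun i hi => hS i (mem_powerset.1 (mem_filter.1 hJ).1 hi)) X Y

theorem sum_superset_Wrat_inv {n : ℕ} {I S : Finset ℕ} (hS : ∀ i ∈ S, i < n) (hI : I ⊆ S)
    {X Y : ℕ → K} (hX : ∀ i ∈ insert 0 S, X i ≠ 0 ∧ X i ≠ 1)
    (hY : ∀ i ∈ insert n S, Y i ≠ 0 ∧ Y i ≠ 1) :
    ∑ J ∈ S.powerset.filter (fun J => I ⊆ J), Wrat n J (fun i => (X i)⁻¹) (fun i => (Y i)⁻¹) =
      -(-1) ^ #S * ∑ J ∈ S.powerset.filter (fun J => S \ I ⊆ J), Wrat n J X Y := by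
  have hXinv : ∀ i ∈ insert 0 S, underline (X i)⁻¹ = -(1 + underline (X i)) :=
    fun i hi => underline_inv (hX i hi).1 (hX i hi).2
  have hYinv : ∀ i ∈ insert n S, underline (Y i)⁻¹ = -(1 + underline (Y i)) :=
    fun i hi => underline_inv (hY i hi).1 (hY i hi).2
  rw [sum_superset_Wrat hS hI, sum_superset_Wrat hS sdiff_subset, Finset.sdiff_sdiff_eq_self hI]
  refine wForm_neg_factors (hXinv 0 (mem_insert_self 0 S))
    (by rw [hYinv n (mem_insert_self n S)]; ring) (fun i hi => ?_) (fun i hi => ?_)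
    (fun i hi => ?_) <;>
  · simp only [mem_sdiff, hi, true_and, hXinv i (mem_insert_of_mem hi),
      hYinv i (mem_insert_of_mem hi)]
    split_ifs <;> ring

end Field

lemma algebraMap_X_ne_zero_and_ne_one {σ R : Type*} [CommRing R] [IsDomain R] (p : σ) :
    algebraMap (MvPolynomial σ R) (FractionRing (MvPolynomial σ R)) (MvPolynomial.X p) ≠ 0 ∧
      algebraMap (MvPolynomial σ R) (FractionRing (MvPolynomial σ R)) (MvPolynomial.X p) ≠ 1 := by
  have hinj := IsFractionRing.injective (MvPolynomial σ R) (FractionRing (MvPolynomial σ R))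
  refine ⟨(map_ne_zero_iff _ hinj).2 (MvPolynomial.X_ne_zero p), (map_ne_one_iff _ hinj).2 ?_⟩
  intro h
  simpa using congrArg MvPolynomial.constantCoeff h

lemma Xvar_ne_zero_and_ne_one {n i : ℕ} (h : i < n) : Xvar n i ≠ 0 ∧ Xvar n i ≠ 1 := by
  rw [Xvar, dif_pos h]
  exact algebraMap_X_ne_zero_and_ne_one _

lemma Yvar_ne_zero_and_ne_one {n i : ℕ} (h : 1 ≤ i ∧ i ≤ n) : Yvar n i ≠ 0 ∧ Yvar n i ≠ 1 := by
  rw [Yvar, dif_pos h]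
  exact algebraMap_X_ne_zero_and_ne_one _

theorem W_superset_sum_inversion (n : ℕ) (hn : 1 ≤ n) (I : Finset ℕ)
    (hI : I ⊆ Finset.Icc 1 (n - 1)) :
    ∑ J ∈ (Finset.Icc 1 (n - 1)).powerset.filter (fun J => I ⊆ J),
        Wrat n J (fun i => (Xvar n i)⁻¹) (fun i => (Yvar n i)⁻¹) =
      (-1) ^ n *
        ∑ J ∈ (Finset.Icc 1 (n - 1)).powerset.filter (fun J => Finset.Icc 1 (n - 1) \ I ⊆ J),
          Wrat n J (Xvar n) (Yvar n) := by
  have hsign : (-1 : KXY n) ^ n = -(-1) ^ #(Icc 1 (n - 1)) := by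
    have h := pow_succ (-1 : KXY n) (n - 1)
    rw [Nat.sub_add_cancel hn] at h
    rw [h, Nat.card_Icc, Nat.add_sub_cancel, mul_neg_one]
  rw [hsign]
  refine sum_superset_Wrat_inv (fun i hi => by grind) hI (fun i hi => ?_) fun i hi => ?_
  · exact Xvar_ne_zero_and_ne_one (by grind)
  · exact Yvar_ne_zero_and_ne_one (by grind)
end

section
/- Let n ≥ 2. In the rational function field ℚ(P,T) define Z◁_n(P,T) := (∏_{i=0}^{n−1}(1−P^i T)^{−1})·(1−P^{n(n−1)} T^{2n−1})^{−1}·Σ_{w∈S_{n−1}} P^{−l(w)} Σ_{I⊆{1,…,n−2}, I⊇ν(w)} ∏_{i∈I} X_i/(1−X_i), where X_i := P^{(n+i)(n−i−1)} T^{2(n−i)−1}. Then Z◁_n(P^{−1},T^{−1}) = −P^{(2n−1)(2n−2)/2}·T^{3n−1}·Z◁_n(P,T). -/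
/-- The descent set ν(w) ⊆ {1,…,n−1} of a permutation w of {1,…,n}
(realized as `Equiv.Perm (Fin n)` via 0-indexing: position i corresponds to `⟨i-1,_⟩`). -/
def descents {n : ℕ} (w : Equiv.Perm (Fin n)) : Finset ℕ :=
  (Finset.Icc 1 (n - 1)).filter fun i =>
    ∃ hi : i < n, w ⟨i, hi⟩ < w ⟨i - 1, Nat.lt_of_le_of_lt (Nat.sub_le i 1) hi⟩

/-- The number of inversions l(w) of a permutation. -/
def invCount {n : ℕ} (w : Equiv.Perm (Fin n)) : ℕ :=
  (Finset.univ.filter fun q : Fin n × Fin n => q.1 < q.2 ∧ w q.2 < w q.1).card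

/-- The rational function field ℚ(P,T). -/
abbrev QPT := FractionRing (MvPolynomial (Fin 2) ℚ)

/-- The variable P of ℚ(P,T). -/
noncomputable def Pv : QPT := algebraMap (MvPolynomial (Fin 2) ℚ) QPT (MvPolynomial.X 0)

/-- The variable T of ℚ(P,T). -/
noncomputable def Tv : QPT := algebraMap (MvPolynomial (Fin 2) ℚ) QPT (MvPolynomial.X 1)


/-- The local normal zeta function `Z◁_n(P,T)` of G_n as a two-variable rational function,
evaluated at a pair of elements of ℚ(P,T). -/
noncomputable def Znormal (n : ℕ) (P T : QPT) : QPT :=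
  (∏ i ∈ Finset.range n, (1 - P ^ i * T)⁻¹) *
    (1 - P ^ (n * (n - 1)) * T ^ (2 * n - 1))⁻¹ *
    ∑ w : Equiv.Perm (Fin (n - 1)),
      P ^ (-(invCount w : ℤ)) *
        ∑ I ∈ (Finset.Icc 1 (n - 2)).powerset.filter (fun I => descents w ⊆ I),
          ∏ i ∈ I,
            (P ^ ((n + i) * (n - i - 1)) * T ^ (2 * (n - i) - 1)) /
              (1 - P ^ ((n + i) * (n - i - 1)) * T ^ (2 * (n - i) - 1))

/-!
Inverting (P, T) inverts every monomial u, and (1 - u⁻¹)⁻¹ = -u (1 - u)⁻¹, so each geometric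
factor of Z◁_n only picks up a sign and a monomial. For the sum over S_{n-1}, summing over all
I ⊇ ν(w) gives ∏_{i ∈ ν(w)} X_i · ∏_i (1 - X_i)⁻¹; after inversion ν(w) is replaced by its
complement, which is undone by w ↦ w₀ w with w₀ the longest element: it complements descent
sets and sends l(w) to binom(n-1, 2) - l(w). Collecting the signs (-1)^n · (-1) · (-1)^(n-2)
and the monomials gives the functional equation.
-/

open Finset

section FieldIdentities

variable {K : Type*} [Field K]

theorem inv_one_sub_inv {x : K} (hx : x ≠ 0) : (1 - x⁻¹)⁻¹ = -(x * (1 - x)⁻¹) := by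
  rcases eq_or_ne x 1 with rfl | hx1
  · simp
  · have : 1 - x ≠ 0 := sub_ne_zero.2 hx1.symm
    field_simp
    ring

theorem prod_inv_one_sub_inv {ι : Type*} (s : Finset ι) {x : ι → K} (hx : ∀ i ∈ s, x i ≠ 0) :
    ∏ i ∈ s, (1 - (x i)⁻¹)⁻¹ = (-1) ^ #s * (∏ i ∈ s, x i) * ∏ i ∈ s, (1 - x i)⁻¹ := by
  rw [prod_congr rfl fun i hi => inv_one_sub_inv (hx i hi), prod_neg, prod_mul_distrib, mul_assoc]

theorem prod_mul_prod_inv_of_subset {ι : Type*} [DecidableEq ι] {ν D : Finset ι} (hν : ν ⊆ D)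
    {x : ι → K} (hx : ∀ i ∈ ν, x i ≠ 0) :
    (∏ i ∈ D, x i) * ∏ i ∈ ν, (x i)⁻¹ = ∏ i ∈ D \ ν, x i := by
  rw [← prod_sdiff hν, mul_assoc, ← prod_mul_distrib,
    prod_congr rfl fun i hi => mul_inv_cancel₀ (hx i hi), prod_const_one, mul_one]

theorem sum_superset_prod {R ι : Type*} [CommSemiring R] [DecidableEq ι] {ν D : Finset ι}
    (hν : ν ⊆ D) (f : ι → R) :
    ∑ I ∈ D.powerset.filter (ν ⊆ ·), ∏ i ∈ I, f i = (∏ i ∈ ν, f i) * ∏ i ∈ D \ ν, (1 + f i) := by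
  have hIcc : D.powerset.filter (ν ⊆ ·) = Icc ν D := by
    ext I
    simp [and_comm]
  have hdisj : ∀ J ∈ (D \ ν).powerset, Disjoint ν J := fun J hJ =>
    disjoint_of_subset_right (mem_powerset.1 hJ) disjoint_sdiff
  have hinj : Set.InjOn (ν ∪ ·) ((D \ ν).powerset : Set (Finset ι)) :=
    fun J hJ J' hJ' (h : ν ∪ J = ν ∪ J') => by
    rw [← union_sdiff_cancel_left (hdisj J hJ), h, union_sdiff_cancel_left (hdisj J' hJ')]
  rw [hIcc, Icc_eq_image_powerset hν, sum_image hinj, prod_one_add, mul_sum]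
  exact sum_congr rfl fun J hJ => prod_union (hdisj J hJ)

theorem sum_superset_prod_div_one_sub {ι : Type*} [DecidableEq ι] {ν D : Finset ι}
    (hν : ν ⊆ D) {x : ι → K} (hx : ∀ i ∈ D, x i ≠ 1) :
    ∑ I ∈ D.powerset.filter (ν ⊆ ·), ∏ i ∈ I, x i / (1 - x i)
      = (∏ i ∈ ν, x i) * ∏ i ∈ D, (1 - x i)⁻¹ := by
  have hgeom : ∀ i ∈ D \ ν, 1 + x i / (1 - x i) = (1 - x i)⁻¹ := fun i hi => by
    have : 1 - x i ≠ 0 := sub_ne_zero.2 (hx i (mem_sdiff.1 hi).1).symm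
    field_simp
    ring
  rw [sum_superset_prod hν, prod_congr rfl hgeom, ← prod_sdiff hν,
    mul_comm (∏ i ∈ D \ ν, _), ← mul_assoc, ← prod_mul_distrib]
  simp only [div_eq_mul_inv]

end FieldIdentities

section Descents

variable {m : ℕ} (w : Equiv.Perm (Fin m))

theorem descents_subset : descents w ⊆ Icc 1 (m - 1) :=
  filter_subset _ _

theorem descents_revPerm_mul : descents (Fin.revPerm * w) = Icc 1 (m - 1) \ descents w := by
  ext i
  simp only [descents, mem_sdiff, mem_filter, Equiv.Perm.mul_apply, Fin.revPerm_apply,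
    Fin.rev_lt_rev]
  refine and_congr_right fun hi => ?_
  have him : i < m := by have := mem_Icc.1 hi; omega
  have hne : w ⟨i - 1, by omega⟩ ≠ w ⟨i, him⟩ := fun h =>
    absurd (Fin.mk.inj_iff.1 (w.injective h)) (by have := mem_Icc.1 hi; omega)
  simp only [hi, true_and, exists_prop_of_true him, not_lt]
  exact ⟨le_of_lt, fun h => lt_of_le_of_ne h hne⟩

theorem invCount_revPerm_mul_add : invCount (Fin.revPerm * w) + invCount w = m.choose 2 := by
  have hrev :
      invCount (Fin.revPerm * w) = #{q : Fin m × Fin m | q.1 < q.2 ∧ ¬ w q.2 < w q.1} := by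
    refine congrArg card (filter_congr fun q _ => and_congr_right fun hq => ?_)
    have hne : w q.1 ≠ w q.2 := w.injective.ne hq.ne
    simp only [Equiv.Perm.mul_apply, Fin.revPerm_apply, Fin.rev_lt_rev, not_lt]
    exact ⟨le_of_lt, fun h => lt_of_le_of_ne h hne⟩
  rw [hrev, invCount, ← filter_filter, ← filter_filter, add_comm,
    card_filter_add_card_filter_not, Fintype.card_product_filter_lt, Fintype.card_fin]

theorem sum_zpow_invCount_mul_prod_sdiff_descents {K : Type*} [Field K] {P : K} (hP : P ≠ 0)
    (x : ℕ → K) :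
    ∑ w : Equiv.Perm (Fin m), P ^ (invCount w : ℤ) * ∏ i ∈ Icc 1 (m - 1) \ descents w, x i
      = P ^ m.choose 2 *
          ∑ w : Equiv.Perm (Fin m), P ^ (-(invCount w : ℤ)) * ∏ i ∈ descents w, x i := by
  refine (Equiv.sum_comp (Equiv.mulLeft Fin.revPerm) _).symm.trans ?_
  rw [mul_sum]
  refine sum_congr rfl fun w _ => ?_
  have hinv : (invCount (Fin.revPerm * w) : ℤ) = m.choose 2 + -(invCount w : ℤ) := by
    have := invCount_revPerm_mul_add w
    omega
  rw [Equiv.coe_mulLeft, descents_revPerm_mul, Finset.sdiff_sdiff_eq_self (descents_subset w),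
    hinv, zpow_add₀ hP, zpow_natCast, mul_assoc]

end Descents

section Factors

variable {K : Type*} [Field K]

def normalX (n : ℕ) (P T : K) (i : ℕ) : K :=
  P ^ ((n + i) * (n - i - 1)) * T ^ (2 * (n - i) - 1)

def descentSum (n : ℕ) (P T : K) : K :=
  ∑ w : Equiv.Perm (Fin (n - 1)), P ^ (-(invCount w : ℤ)) *
    ∑ I ∈ (Icc 1 (n - 2)).powerset.filter (fun I => descents w ⊆ I),
      ∏ i ∈ I, normalX n P T i / (1 - normalX n P T i)

theorem Znormal_eq (n : ℕ) (P T : QPT) :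
    Znormal n P T = (∏ i ∈ range n, (1 - P ^ i * T)⁻¹) *
      (1 - P ^ (n * (n - 1)) * T ^ (2 * n - 1))⁻¹ * descentSum n P T :=
  rfl

theorem prod_range_inv_one_sub_inv {P T : K} (hP : P ≠ 0) (hT : T ≠ 0) (n : ℕ) :
    ∏ i ∈ range n, (1 - P⁻¹ ^ i * T⁻¹)⁻¹
      = (-1) ^ n * P ^ n.choose 2 * T ^ n * ∏ i ∈ range n, (1 - P ^ i * T)⁻¹ := by
  simp only [inv_pow, ← mul_inv]
  rw [prod_inv_one_sub_inv _ fun i _ => mul_ne_zero (pow_ne_zero i hP) hT, prod_mul_distrib,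
    prod_pow_eq_pow_sum, sum_range_id, ← Nat.choose_two_right, prod_const, card_range]
  ring

theorem inv_one_sub_inv_pow_mul_inv_pow {P T : K} (hP : P ≠ 0) (hT : T ≠ 0) (a b : ℕ) :
    (1 - P⁻¹ ^ a * T⁻¹ ^ b)⁻¹ = -(P ^ a * T ^ b * (1 - P ^ a * T ^ b)⁻¹) := by
  rw [inv_pow, inv_pow, ← mul_inv,
    inv_one_sub_inv (mul_ne_zero (pow_ne_zero a hP) (pow_ne_zero b hT))]

theorem normalX_inv (n : ℕ) (P T : K) : normalX n P⁻¹ T⁻¹ = fun i => (normalX n P T i)⁻¹ := by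
  ext i
  simp only [normalX, inv_pow, mul_inv]

theorem descents_subset_Icc_sub_two {n : ℕ} (w : Equiv.Perm (Fin (n - 1))) :
    descents w ⊆ Icc 1 (n - 2) :=
  Nat.sub_sub n 1 1 ▸ descents_subset w

theorem descentSum_eq {n : ℕ} {P T : K} (hX : ∀ i ∈ Icc 1 (n - 2), normalX n P T i ≠ 1) :
    descentSum n P T = (∏ i ∈ Icc 1 (n - 2), (1 - normalX n P T i)⁻¹) *
      ∑ w : Equiv.Perm (Fin (n - 1)),
        P ^ (-(invCount w : ℤ)) * ∏ i ∈ descents w, normalX n P T i := by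
  rw [descentSum, mul_sum]
  refine sum_congr rfl fun w _ => ?_
  rw [sum_superset_prod_div_one_sub (descents_subset_Icc_sub_two w) hX]
  ring

theorem descentSum_inv {n : ℕ} {P T : K} (hP : P ≠ 0) (hT : T ≠ 0)
    (hX : ∀ i ∈ Icc 1 (n - 2), normalX n P T i ≠ 1) :
    descentSum n P⁻¹ T⁻¹ = (-1) ^ (n - 2) * P ^ (n - 1).choose 2 * descentSum n P T := by
  set X := normalX n P T
  have hX0 : ∀ i, X i ≠ 0 := fun i => mul_ne_zero (pow_ne_zero _ hP) (pow_ne_zero _ hT)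
  have hXinv : ∀ i ∈ Icc 1 (n - 2), normalX n P⁻¹ T⁻¹ i ≠ 1 := by
    simpa only [normalX_inv, inv_ne_one] using hX
  have hreverse : (∏ i ∈ Icc 1 (n - 2), X i) *
      ∑ w : Equiv.Perm (Fin (n - 1)), P⁻¹ ^ (-(invCount w : ℤ)) * ∏ i ∈ descents w, (X i)⁻¹
      = P ^ (n - 1).choose 2 *
          ∑ w : Equiv.Perm (Fin (n - 1)), P ^ (-(invCount w : ℤ)) * ∏ i ∈ descents w, X i := by
    -- `n - 2` must first be spelled `n - 1 - 1`, as in the reversal lemma for `m := n - 1`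
    rw [← Nat.sub_sub n 1 1, ← sum_zpow_invCount_mul_prod_sdiff_descents hP, mul_sum]
    refine sum_congr rfl fun w _ => ?_
    rw [inv_zpow', neg_neg, mul_left_comm, prod_mul_prod_inv_of_subset (descents_subset w)
      fun i _ => hX0 i]
  rw [descentSum_eq hXinv, descentSum_eq hX]
  simp only [normalX_inv]
  rw [prod_inv_one_sub_inv _ fun i _ => hX0 i, Nat.card_Icc, Nat.add_sub_cancel]
  calc _ = (-1) ^ (n - 2) * (∏ i ∈ Icc 1 (n - 2), (1 - X i)⁻¹) *
        ((∏ i ∈ Icc 1 (n - 2), X i) * ∑ w : Equiv.Perm (Fin (n - 1)),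
          P⁻¹ ^ (-(invCount w : ℤ)) * ∏ i ∈ descents w, (X i)⁻¹) := by ring
    _ = _ := by rw [hreverse]; ring

end Factors

section RationalFunctions

theorem Pv_ne_zero : Pv ≠ 0 :=
  IsFractionRing.to_map_ne_zero_of_mem_nonZeroDivisors
    (mem_nonZeroDivisors_of_ne_zero (MvPolynomial.X_ne_zero 0))

theorem Tv_ne_zero : Tv ≠ 0 :=
  IsFractionRing.to_map_ne_zero_of_mem_nonZeroDivisors
    (mem_nonZeroDivisors_of_ne_zero (MvPolynomial.X_ne_zero 1))

theorem Pv_pow_mul_Tv_pow_ne_one (a : ℕ) {b : ℕ} (hb : b ≠ 0) : Pv ^ a * Tv ^ b ≠ 1 := by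
  intro h
  have hpoly : (MvPolynomial.X 0 ^ a * MvPolynomial.X 1 ^ b : MvPolynomial (Fin 2) ℚ) = 1 := by
    apply IsFractionRing.injective (MvPolynomial (Fin 2) ℚ) QPT
    simpa [Pv, Tv] using h
  simpa [hb] using congrArg (MvPolynomial.eval 0) hpoly

end RationalFunctions

theorem normal_zeta_functional_equation (n : ℕ) (hn : 2 ≤ n) :
    Znormal n Pv⁻¹ Tv⁻¹ =
      -Pv ^ ((2 * n - 1) * (2 * n - 2) / 2) * Tv ^ (3 * n - 1) * Znormal n Pv Tv := by
  have hX : ∀ i ∈ Icc 1 (n - 2), normalX n Pv Tv i ≠ 1 := fun i hi =>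
    Pv_pow_mul_Tv_pow_ne_one _ (by have := (mem_Icc.1 hi).2; omega)
  have hsign : (-1 : QPT) ^ n * (-1) ^ (n - 2) = 1 := by
    rw [← pow_add]
    exact Even.neg_one_pow ⟨n - 1, by omega⟩
  have hPexp : n.choose 2 + n * (n - 1) + (n - 1).choose 2 = (2 * n - 1) * (2 * n - 2) / 2 := by
    rw [show 2 * n - 2 = 2 * n - 1 - 1 by omega, ← Nat.choose_two_right]
    apply Nat.cast_injective (R := ℚ)
    push_cast [Nat.cast_choose_two, Nat.cast_sub (by omega : 1 ≤ n),
      Nat.cast_sub (by omega : 1 ≤ 2 * n)]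
    ring
  have hTexp : n + (2 * n - 1) = 3 * n - 1 := by omega
  rw [Znormal_eq, Znormal_eq, prod_range_inv_one_sub_inv Pv_ne_zero Tv_ne_zero,
    inv_one_sub_inv_pow_mul_inv_pow Pv_ne_zero Tv_ne_zero, descentSum_inv Pv_ne_zero Tv_ne_zero hX]
  set A := ∏ i ∈ range n, (1 - Pv ^ i * Tv)⁻¹
  set B := (1 - Pv ^ (n * (n - 1)) * Tv ^ (2 * n - 1))⁻¹
  set D := descentSum n Pv Tv
  calc _ = ((-1) ^ n * (-1) ^ (n - 2)) *
        -(Pv ^ (n.choose 2 + n * (n - 1) + (n - 1).choose 2) * Tv ^ (n + (2 * n - 1)) *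
          (A * B * D)) := by ring
    _ = _ := by rw [hsign, one_mul, hPexp, hTexp, neg_mul, neg_mul]
end

section
/- Let n ≥ 2 be such that 2n−1 is a prime number with 2n−1 ≥ 11. Then the real number max({n} ∪ {((n+l)(n−l−1)+1)/(n−l) : 1 ≤ l ≤ n−2}) is not an integer. -/
theorem abscissa_not_integral (n : ℕ) (hn : 2 ≤ n)
    (hprime : Nat.Prime (2 * n - 1)) (h11 : 11 ≤ 2 * n - 1) :
    ¬∃ k : ℤ,
      ((insert ((n : ℝ))
          ((Finset.Icc 1 (n - 2)).image
            (fun l : ℕ => (((n : ℝ) + l) * ((n : ℝ) - l - 1) + 1) / ((n : ℝ) - l)))).max'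
        (Finset.insert_nonempty _ _)) = (k : ℝ) := by
  have h6 : 6 ≤ n := by omega
  rintro ⟨k, hk⟩
  set S := (insert ((n : ℝ))
      ((Finset.Icc 1 (n - 2)).image
        (fun l : ℕ => (((n : ℝ) + l) * ((n : ℝ) - l - 1) + 1) / ((n : ℝ) - l)))) with hS
  set M := S.max' (Finset.insert_nonempty _ _) with hM
  have hMmem : M ∈ S := Finset.max'_mem _ _
  have hmem3 : (n - 3 : ℕ) ∈ Finset.Icc 1 (n - 2) := by
    simp only [Finset.mem_Icc]; omega
  have hc3 : ((n - 3 : ℕ) : ℝ) = (n : ℝ) - 3 := by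
    have h3 : (3:ℕ) ≤ n := by omega
    push_cast [h3]; ring
  have hvalmem : ((4 * (n:ℝ) - 5) / 3) ∈ S := by
    rw [hS]
    apply Finset.mem_insert_of_mem
    refine Finset.mem_image.mpr ⟨n - 3, hmem3, ?_⟩
    simp only [hc3]
    have h0 : ((n:ℝ) - ((n:ℝ) - 3)) = 3 := by ring
    rw [h0]
    ring
  have hgt : (n : ℝ) < (4 * (n:ℝ) - 5) / 3 := by
    rw [lt_div_iff₀ (by norm_num : (0:ℝ) < 3)]
    have : (6:ℝ) ≤ n := by exact_mod_cast h6
    linarith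
  have hle : (4 * (n:ℝ) - 5) / 3 ≤ M := Finset.le_max' _ _ hvalmem
  rcases Finset.mem_insert.mp hMmem with h | h
  · rw [h] at hle; linarith
  · obtain ⟨l, hl, hfl⟩ := Finset.mem_image.mp h
    rw [Finset.mem_Icc] at hl
    have hln : (l : ℝ) < n := by exact_mod_cast (by omega : l < n)
    have hne : (n : ℝ) - l ≠ 0 := by linarith
    rw [hk] at hfl
    have heq : (((n : ℝ) + l) * ((n : ℝ) - l - 1) + 1) = k * ((n:ℝ) - l) :=
      (div_eq_iff hne).mp hfl
    have heqZ : (((n : ℤ) + l) * ((n : ℤ) - l - 1) + 1) = k * ((n:ℤ) - l) := by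
      exact_mod_cast heq
    have hdvd : ((n : ℤ) - l) ∣ (2 * n - 1 : ℤ) := by
      refine ⟨(n:ℤ) + l + 1 - k, ?_⟩
      linear_combination -heqZ
    have hdvdN : (n - l) ∣ (2 * n - 1) := by
      have h1 : ((n - l : ℕ) : ℤ) = (n : ℤ) - l := by
        push_cast [(by omega : l ≤ n)]; ring
      have h2 : ((2 * n - 1 : ℕ) : ℤ) = 2 * (n : ℤ) - 1 := by
        push_cast [(by omega : 1 ≤ 2 * n)]; ring
      rw [← Int.natCast_dvd_natCast, h1, h2]
      exact hdvd
    rcases (Nat.Prime.eq_one_or_self_of_dvd hprime _ hdvdN) with h1 | h1 <;> omega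
end

section
/- Let n ≥ 2. For every m ≥ 1 the number a^≤_m(G_n) of subgroups of G_n of index m is finite, and the function m ↦ a^≤_m(G_n) is multiplicative: for all m₁, m₂ ≥ 1 with gcd(m₁,m₂) = 1, a^≤_{m₁m₂}(G_n) = a^≤_{m₁}(G_n)·a^≤_{m₂}(G_n). -/
/-- The generator x_{i+1} (0-indexed `i : Fin (m+1)`), inside the free group. -/
def xgen {m : ℕ} (i : Fin (m + 1)) : FreeGroup (Fin (m + 1) ⊕ Fin m) :=
  FreeGroup.of (Sum.inl i)

/-- The generator y_{i+1} (0-indexed `i : Fin m`), inside the free group. -/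
def ygen {m : ℕ} (i : Fin m) : FreeGroup (Fin (m + 1) ⊕ Fin m) :=
  FreeGroup.of (Sum.inr i)

open scoped commutatorElement

/-- Relators of G_{m+1}: `[x_i,x_n]y_i⁻¹` (1 ≤ i ≤ n−1), `[x_i,x_j]` (1 ≤ i < j ≤ n−1),
and the commutators of each y_i with every generator (here n = m+1). -/
def grenhamRels (m : ℕ) : Set (FreeGroup (Fin (m + 1) ⊕ Fin m)) :=
  {r | (∃ i : Fin m, r = ⁅xgen i.castSucc, xgen (Fin.last m)⁆ * (ygen i)⁻¹) ∨
       (∃ i j : Fin m, i < j ∧ r = ⁅xgen i.castSucc, xgen j.castSucc⁆) ∨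
       (∃ (i : Fin m) (g : Fin (m + 1) ⊕ Fin m), r = ⁅ygen i, FreeGroup.of g⁆)}

/-- The group G_{m+1} (so `GrenhamGroup (n-1)` is the group G_n of the paper). -/
abbrev GrenhamGroup (m : ℕ) := PresentedGroup (grenhamRels m)

/-!
In a nilpotent group, a subgroup `H` of index `m₁ m₂` with `m₁, m₂` coprime lies in exactly one
subgroup `A` of index `m₁` and exactly one subgroup `B` of index `m₂`, and `H = A ⊓ B`; so
`(A, B) ↦ A ⊓ B` is a bijection onto the subgroups of index `m₁ m₂`. To find `A`, pass to the finite
nilpotent quotient by the normal core of `H`: there `A` is `H S`, where `S` is the product of the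
(normal) Sylow subgroups for the primes not dividing `m₁`. The group `G_n` is nilpotent because the
commutators of its generators are central. Finiteness of the counts holds in every finitely
generated group: a subgroup of index `m` is a point stabilizer for a homomorphism to `Sym(m)`.
-/

open Subgroup

theorem MonoidHom.finite_of_fg (G F : Type*) [Group G] [Group.FG G] [Group F] [Finite F] :
    Finite (G →* F) := by
  obtain ⟨S, hS, hSfin⟩ := Group.fg_iff.mp ‹Group.FG G›
  have := hSfin.to_subtype
  exact Finite.of_injective (fun f : G →* F ↦ fun s : S ↦ f s) fun f g hfg ↦
    MonoidHom.eq_of_eqOn_dense hS fun x hx ↦ congrFun hfg ⟨x, hx⟩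

namespace Subgroup

variable {G : Type*} [Group G]

theorem eq_of_le_of_index_eq {H K : Subgroup G} [H.FiniteIndex] (h : H ≤ K)
    (he : H.index = K.index) : H = K :=
  by_contra fun hne ↦ (index_strictAnti (h.lt_of_ne hne)).ne he.symm

theorem index_inf_of_coprime {H K : Subgroup G} (h : H.index.Coprime K.index) :
    (H ⊓ K).index = H.index * K.index := by
  obtain h0 | h0 := eq_or_ne (H ⊓ K).index 0
  · rw [h0, eq_comm, mul_eq_zero]
    by_contra! hne
    exact index_inf_ne_zero hne.1 hne.2 h0
  · exact le_antisymm index_inf_le <| Nat.le_of_dvd (Nat.pos_of_ne_zero h0) <|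
      h.mul_dvd_of_dvd_of_dvd (index_dvd_of_le inf_le_left) (index_dvd_of_le inf_le_right)

theorem exists_comap_stabilizer_eq {H : Subgroup G} {m : ℕ} (hH : H.index = m) (hm : m ≠ 0) :
    ∃ (φ : G →* Equiv.Perm (Fin m)) (x : Fin m),
      (MulAction.stabilizer (Equiv.Perm (Fin m)) x).comap φ = H := by
  have : Finite (G ⧸ H) := Nat.finite_of_card_ne_zero (by rwa [← index_eq_card, hH])
  let e : G ⧸ H ≃ Fin m := Finite.equivFinOfCardEq (by rw [← index_eq_card, hH])
  refine ⟨e.permCongrHom.toMonoidHom.comp (MulAction.toPermHom G (G ⧸ H)), e (1 : G), ?_⟩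
  ext g
  simp [MulAction.mem_stabilizer_iff, Equiv.permCongr_apply, QuotientGroup.eq]

theorem finite_index_eq [Group.FG G] {m : ℕ} (hm : m ≠ 0) :
    Finite {H : Subgroup G // H.index = m} := by
  have := MonoidHom.finite_of_fg G (Equiv.Perm (Fin m))
  refine Set.Finite.to_subtype (Set.Finite.subset (Set.finite_range fun P :
    (G →* Equiv.Perm (Fin m)) × Fin m ↦ (MulAction.stabilizer _ P.2).comap P.1) ?_)
  intro H hH
  obtain ⟨φ, x, h⟩ := exists_comap_stabilizer_eq hH hm
  exact ⟨(φ, x), h⟩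

theorem card_sup_dvd_of_normal (H N : Subgroup G) [N.Normal] :
    Nat.card ↥(H ⊔ N) ∣ Nat.card H * Nat.card N := by
  have h := relIndex_mul_relIndex (⊥ : Subgroup G) N (H ⊔ N) bot_le le_sup_right
  rw [relIndex_sup_right, relIndex_bot_left, relIndex_bot_left, mul_comm] at h
  exact h ▸ mul_dvd_mul_right (relIndex_dvd_card N H) _

theorem relIndex_sup_dvd_card [Finite G] (H N : Subgroup G) [N.Normal] :
    H.relIndex (H ⊔ N) ∣ Nat.card N := by
  refine Nat.dvd_of_mul_dvd_mul_left (Nat.card_pos (α := H)) ?_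
  have h := relIndex_mul_relIndex (⊥ : Subgroup G) H (H ⊔ N) bot_le le_sup_left
  rw [relIndex_bot_left, relIndex_bot_left] at h
  exact h ▸ card_sup_dvd_of_normal H N

theorem le_of_normal_of_coprime [Finite G] {N A : Subgroup G} [N.Normal]
    (h : (Nat.card N).Coprime A.index) : N ≤ A :=
  le_sup_right.trans <| relIndex_eq_one.mp <|
    Nat.eq_one_of_dvd_coprimes h (relIndex_sup_dvd_card A N) (relIndex_dvd_index_of_le le_sup_left)

theorem coprime_card_biSup {ι : Type*} (s : Finset ι) (N : ι → Subgroup G)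
    (hN : ∀ i ∈ s, (N i).Normal) {m : ℕ} (h : ∀ i ∈ s, (Nat.card (N i)).Coprime m) :
    (Nat.card ↥(⨆ i ∈ s, N i)).Coprime m := by
  classical
  induction s using Finset.induction_on with
  | empty => simp
  | insert a s ha ih =>
    have : (⨆ i ∈ s, N i).Normal := biSup_normal _ _ fun i hi ↦ hN i (Finset.mem_insert_of_mem hi)
    rw [Finset.iSup_insert]
    refine Nat.Coprime.coprime_dvd_left (card_sup_dvd_of_normal _ _) <|
      Nat.Coprime.mul_left (h a (Finset.mem_insert_self a s)) (ih ?_ ?_)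
    · exact fun i hi ↦ hN i (Finset.mem_insert_of_mem hi)
    · exact fun i hi ↦ h i (Finset.mem_insert_of_mem hi)

theorem mem_center_of_commute {s : Set G} (hs : closure s = ⊤) {g : G}
    (h : ∀ x ∈ s, Commute g x) : g ∈ center G := by
  rw [center_eq_iInf hs]
  simp only [mem_iInf, mem_centralizer_singleton_iff]
  exact fun x hx ↦ (h x hx).eq

theorem center_eq_top_of_commute {s : Set G} (hs : closure s = ⊤)
    (h : ∀ x ∈ s, ∀ y ∈ s, Commute x y) : center G = ⊤ :=
  eq_top_iff.mpr <| hs ▸ (closure_le _).mpr fun x hx ↦ mem_center_of_commute hs (h x hx)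

end Subgroup

theorem Group.isNilpotent_of_commutatorElement_mem_center {G : Type*} [Group G] {s : Set G}
    (hs : closure s = ⊤) (h : ∀ x ∈ s, ∀ y ∈ s, ⁅x, y⁆ ∈ center G) : Group.IsNilpotent G := by
  let π := QuotientGroup.mk' (center G)
  refine Group.of_quotient_center_nilpotent ⟨1, ?_⟩
  rw [Subgroup.upperCentralSeries_one]
  refine center_eq_top_of_commute (s := π '' s) ?_ ?_
  · rw [← MonoidHom.map_closure, hs, map_top_of_surjective _ (QuotientGroup.mk'_surjective _)]
  · rintro _ ⟨x, hx, rfl⟩ _ ⟨y, hy, rfl⟩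
    rw [← commutatorElement_eq_one_iff_commute, ← map_commutatorElement,
      QuotientGroup.mk'_apply, QuotientGroup.eq_one_iff]
    exact h x hx y hy

section FiniteNilpotent

variable (Q : Type*) [Group Q]

/-- In a finite nilpotent group this is the Hall subgroup of order prime to `m`. -/
noncomputable def coprimeSylowSup (m : ℕ) : Subgroup Q :=
  ⨆ p ∈ (Nat.card Q).primeFactors.filter (¬ · ∣ m), ⨆ P : Sylow p Q, (P : Subgroup Q)

variable {Q} [Finite Q] {m : ℕ}

theorem iSup_sylow_eq [Group.IsNilpotent Q] {p : ℕ} [Fact p.Prime] (P : Sylow p Q) :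
    ⨆ P' : Sylow p Q, (P' : Subgroup Q) = P :=
  have := Sylow.unique_of_normal P inferInstance
  le_antisymm (iSup_le fun P' ↦ (Subsingleton.elim P' P).le)
    (le_iSup (fun P' : Sylow p Q ↦ (P' : Subgroup Q)) P)

instance coprimeSylowSup.normal [Group.IsNilpotent Q] : (coprimeSylowSup Q m).Normal :=
  biSup_normal _ _ fun _ hp ↦
    have := Fact.mk (Nat.prime_of_mem_primeFactors (Finset.mem_filter.1 hp).1)
    iSup_normal _

theorem coprime_card_coprimeSylowSup [Group.IsNilpotent Q] :
    (Nat.card (coprimeSylowSup Q m)).Coprime m := by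
  refine coprime_card_biSup _ _ (fun p hp ↦ ?_) fun p hp ↦ ?_ <;>
    obtain ⟨hpQ, hpm⟩ := Finset.mem_filter.1 hp <;>
    have := Fact.mk (Nat.prime_of_mem_primeFactors hpQ)
  · exact iSup_normal _
  · obtain ⟨P⟩ := (inferInstance : Nonempty (Sylow p Q))
    obtain ⟨k, hk⟩ := P.isPGroup'.exists_card_eq
    rw [iSup_sylow_eq P, hk]
    exact Nat.Coprime.pow_left k ((Nat.Prime.coprime_iff_not_dvd Fact.out).2 hpm)

theorem not_dvd_index_coprimeSylowSup {p : ℕ} (hp : p.Prime) (hpm : ¬ p ∣ m) :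
    ¬ p ∣ (coprimeSylowSup Q m).index := by
  intro hdvd
  have := Fact.mk hp
  obtain ⟨P⟩ := (inferInstance : Nonempty (Sylow p Q))
  have hmem : p ∈ (Nat.card Q).primeFactors.filter (¬ · ∣ m) := Finset.mem_filter.2
    ⟨Nat.mem_primeFactors.2 ⟨hp, hdvd.trans (index_dvd_card _), Nat.card_pos.ne'⟩, hpm⟩
  have hle : (P : Subgroup Q) ≤ coprimeSylowSup Q m :=
    le_iSup₂_of_le p hmem (le_iSup (fun P' : Sylow p Q ↦ (P' : Subgroup Q)) P)
  exact P.not_dvd_index (hdvd.trans (index_dvd_of_le hle))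

theorem coprimeSylowSup_le [Group.IsNilpotent Q] {A : Subgroup Q} (hA : A.index ∣ m) :
    coprimeSylowSup Q m ≤ A :=
  le_of_normal_of_coprime (coprime_card_coprimeSylowSup.coprime_dvd_right hA)

theorem index_sup_coprimeSylowSup [Group.IsNilpotent Q] {K : Subgroup Q} {m₁ m₂ : ℕ}
    (hco : m₁.Coprime m₂) (hK : K.index = m₁ * m₂) :
    (K ⊔ coprimeSylowSup Q m₁).index = m₁ := by
  set S := coprimeSylowSup Q m₁
  -- `[K ⊔ S : K]` divides `|S|`, which is prime to `m₁`; and `S` contains the Sylow subgroups for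
  -- the primes dividing `m₂`, so these do not divide the index of `K ⊔ S`.
  have hdvd : (K ⊔ S).index ∣ m₁ * m₂ := hK ▸ index_dvd_of_le le_sup_left
  have hcop₂ : (K ⊔ S).index.Coprime m₂ := Nat.coprime_of_dvd fun p hp hpB hpm₂ ↦
    not_dvd_index_coprimeSylowSup hp
      (fun hpm₁ ↦ hp.one_lt.ne' (Nat.eq_one_of_dvd_coprimes hco hpm₁ hpm₂))
      (hpB.trans (index_dvd_of_le le_sup_right))
  have hcop₁ : m₁.Coprime (K.relIndex (K ⊔ S)) :=
    Nat.Coprime.coprime_dvd_right (relIndex_sup_dvd_card K S) coprime_card_coprimeSylowSup.symm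
  have hmul : K.relIndex (K ⊔ S) * (K ⊔ S).index = m₁ * m₂ := hK ▸ relIndex_mul_index le_sup_left
  exact Nat.dvd_antisymm (hcop₂.dvd_of_dvd_mul_right hdvd)
    (hcop₁.dvd_of_dvd_mul_left (hmul ▸ dvd_mul_right m₁ m₂))

theorem existsUnique_le_index_eq_of_coprime_of_finite [Group.IsNilpotent Q] {K : Subgroup Q} {m₁ m₂ : ℕ}
    (hco : m₁.Coprime m₂) (hK : K.index = m₁ * m₂) : ∃! B : Subgroup Q, K ≤ B ∧ B.index = m₁ :=
  ⟨K ⊔ coprimeSylowSup Q m₁, ⟨le_sup_left, index_sup_coprimeSylowSup hco hK⟩,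
    fun _ ⟨hKA, hA⟩ ↦ (eq_of_le_of_index_eq (sup_le hKA (coprimeSylowSup_le hA.dvd))
      ((index_sup_coprimeSylowSup hco hK).trans hA.symm)).symm⟩

end FiniteNilpotent

namespace Subgroup

variable {G : Type*} [Group G]

theorem existsUnique_le_index_eq_of_map {Q : Type*} [Group Q] {f : G →* Q}
    (hf : Function.Surjective f) {H : Subgroup G} (hker : f.ker ≤ H) {m : ℕ}
    (h : ∃! B : Subgroup Q, H.map f ≤ B ∧ B.index = m) :
    ∃! A : Subgroup G, H ≤ A ∧ A.index = m := by
  obtain ⟨B, ⟨hHB, hB⟩, huniq⟩ := h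
  refine ⟨B.comap f, ⟨map_le_iff_le_comap.mp hHB, (index_comap_of_surjective B hf).trans hB⟩,
    fun A ⟨hHA, hA⟩ ↦ ?_⟩
  have hkA : f.ker ≤ A := hker.trans hHA
  rw [← huniq (A.map f) ⟨map_mono hHA, (index_map_eq A hf hkA).trans hA⟩, comap_map_eq_self hkA]

theorem existsUnique_le_index_eq_of_coprime [Group.IsNilpotent G] {H : Subgroup G} [H.FiniteIndex]
    {m₁ m₂ : ℕ} (hco : m₁.Coprime m₂) (hH : H.index = m₁ * m₂) :
    ∃! A : Subgroup G, H ≤ A ∧ A.index = m₁ := by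
  let π := QuotientGroup.mk' H.normalCore
  have hker : π.ker ≤ H := by rw [QuotientGroup.ker_mk']; exact normalCore_le H
  have hπ : Function.Surjective π := QuotientGroup.mk'_surjective _
  exact existsUnique_le_index_eq_of_map hπ hker <|
    existsUnique_le_index_eq_of_coprime_of_finite hco ((index_map_eq H hπ hker).trans hH)

theorem card_index_eq_mul_of_coprime [Group.IsNilpotent G] {m₁ m₂ : ℕ} (h₁ : m₁ ≠ 0)
    (h₂ : m₂ ≠ 0) (hco : m₁.Coprime m₂) :
    Nat.card {H : Subgroup G // H.index = m₁ * m₂} =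
      Nat.card {H : Subgroup G // H.index = m₁} * Nat.card {H : Subgroup G // H.index = m₂} := by
  have key : ∀ H : {H : Subgroup G // H.index = m₁ * m₂},
      (∃! A : Subgroup G, H.1 ≤ A ∧ A.index = m₁) ∧ ∃! B : Subgroup G, H.1 ≤ B ∧ B.index = m₂ :=
    fun ⟨H, hH⟩ ↦
      have : H.FiniteIndex := ⟨hH ▸ mul_ne_zero h₁ h₂⟩
      ⟨existsUnique_le_index_eq_of_coprime hco hH,
        existsUnique_le_index_eq_of_coprime hco.symm (hH.trans (mul_comm _ _))⟩
  let f : {A : Subgroup G // A.index = m₁} × {B : Subgroup G // B.index = m₂} →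
      {H : Subgroup G // H.index = m₁ * m₂} := fun P ↦
    ⟨P.1.1 ⊓ P.2.1, by rw [index_inf_of_coprime (by rw [P.1.2, P.2.2]; exact hco), P.1.2, P.2.2]⟩
  have hf : Function.Bijective f := by
    constructor
    · rintro ⟨⟨A, hA⟩, ⟨B, hB⟩⟩ ⟨⟨A', hA'⟩, ⟨B', hB'⟩⟩ heq
      have hAB : A ⊓ B = A' ⊓ B' := congrArg Subtype.val heq
      obtain ⟨hu₁, hu₂⟩ := key (f ⟨⟨A, hA⟩, ⟨B, hB⟩⟩)
      obtain rfl : A = A' := hu₁.unique ⟨inf_le_left, hA⟩ ⟨hAB.le.trans inf_le_left, hA'⟩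
      obtain rfl : B = B' := hu₂.unique ⟨inf_le_right, hB⟩ ⟨hAB.le.trans inf_le_right, hB'⟩
      rfl
    · intro H
      obtain ⟨⟨A, ⟨hHA, hA⟩, -⟩, ⟨B, ⟨hHB, hB⟩, -⟩⟩ := key H
      have : H.1.FiniteIndex := ⟨by rw [H.2]; exact mul_ne_zero h₁ h₂⟩
      refine ⟨⟨⟨A, hA⟩, ⟨B, hB⟩⟩, Subtype.ext ?_⟩
      exact (eq_of_le_of_index_eq (le_inf hHA hHB) (H.2.trans (f ⟨⟨A, hA⟩, ⟨B, hB⟩⟩).2.symm)).symm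
  rw [← Nat.card_prod]
  exact (Nat.card_congr (Equiv.ofBijective f hf)).symm

end Subgroup

instance PresentedGroup.fg {α : Type*} [Finite α] (rels : Set (FreeGroup α)) :
    Group.FG (PresentedGroup rels) :=
  Group.fg_iff.mpr ⟨_, closure_range_of rels, Set.finite_range _⟩

namespace GrenhamGroup

variable {m : ℕ}

local notation "gen" => PresentedGroup.of (rels := grenhamRels m)

theorem commute_of_inr (i : Fin m) (g : Fin (m + 1) ⊕ Fin m) : Commute (gen (.inr i)) (gen g) := by
  have h := PresentedGroup.one_of_mem (rels := grenhamRels m) (Or.inr (Or.inr ⟨i, g, rfl⟩))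
  rwa [map_commutatorElement, commutatorElement_eq_one_iff_commute] at h

theorem commutatorElement_castSucc_last (i : Fin m) :
    ⁅gen (.inl i.castSucc), gen (.inl (Fin.last m))⁆ = gen (.inr i) := by
  have h := PresentedGroup.one_of_mem (rels := grenhamRels m) (Or.inl ⟨i, rfl⟩)
  rwa [map_mul, map_inv, map_commutatorElement, mul_inv_eq_one] at h

theorem commutatorElement_castSucc_castSucc {i j : Fin m} (hij : i < j) :
    ⁅gen (.inl i.castSucc), gen (.inl j.castSucc)⁆ = 1 := by
  have h := PresentedGroup.one_of_mem (rels := grenhamRels m) (Or.inr (Or.inl ⟨i, j, hij, rfl⟩))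
  rwa [map_commutatorElement] at h

theorem inr_mem_center (i : Fin m) : gen (.inr i) ∈ center (GrenhamGroup m) :=
  mem_center_of_commute (PresentedGroup.closure_range_of _) fun _ ⟨g, hg⟩ ↦ hg ▸ commute_of_inr i g

theorem commutatorElement_inl_mem_center (a b : Fin (m + 1)) :
    ⁅gen (.inl a), gen (.inl b)⁆ ∈ center (GrenhamGroup m) := by
  wlog hab : a ≤ b generalizing a b
  · rw [← commutatorElement_inv]
    exact inv_mem (this b a (le_of_not_ge hab))
  induction b using Fin.lastCases with
  | last =>
    induction a using Fin.lastCases with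
    | last => rw [commutatorElement_self]; exact one_mem _
    | cast i => rw [commutatorElement_castSucc_last]; exact inr_mem_center i
  | cast j =>
    obtain ⟨i, rfl⟩ := Fin.eq_castSucc_of_ne_last (hab.trans_lt (Fin.castSucc_lt_last j)).ne
    obtain hij | rfl := (Fin.castSucc_le_castSucc_iff.mp hab).lt_or_eq
    · rw [commutatorElement_castSucc_castSucc hij]; exact one_mem _
    · rw [commutatorElement_self]; exact one_mem _

instance isNilpotent : Group.IsNilpotent (GrenhamGroup m) := by
  refine Group.isNilpotent_of_commutatorElement_mem_center (PresentedGroup.closure_range_of _) ?_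
  rintro _ ⟨u, rfl⟩ _ ⟨v, rfl⟩
  obtain a | i := u
  · obtain b | j := v
    · exact commutatorElement_inl_mem_center a b
    · rw [commutatorElement_eq_one_iff_commute.mpr (commute_of_inr j _).symm]; exact one_mem _
  · rw [commutatorElement_eq_one_iff_commute.mpr (commute_of_inr i _)]; exact one_mem _

end GrenhamGroup

theorem subgroup_count_finite_and_multiplicative_general (n : ℕ) :
    (∀ m : ℕ, 1 ≤ m → Finite {H : Subgroup (GrenhamGroup (n - 1)) // H.index = m}) ∧
    ∀ m₁ m₂ : ℕ, 1 ≤ m₁ → 1 ≤ m₂ → Nat.gcd m₁ m₂ = 1 →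
      Nat.card {H : Subgroup (GrenhamGroup (n - 1)) // H.index = m₁ * m₂} =
        Nat.card {H : Subgroup (GrenhamGroup (n - 1)) // H.index = m₁} *
          Nat.card {H : Subgroup (GrenhamGroup (n - 1)) // H.index = m₂} :=
  ⟨fun _ hm ↦ finite_index_eq (by omega),
    fun _ _ h₁ h₂ hco ↦ card_index_eq_mul_of_coprime (by omega) (by omega) hco⟩

theorem subgroup_count_finite_and_multiplicative (n : ℕ) (hn : 2 ≤ n) :
    (∀ m : ℕ, 1 ≤ m → Finite {H : Subgroup (GrenhamGroup (n - 1)) // H.index = m}) ∧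
    ∀ m₁ m₂ : ℕ, 1 ≤ m₁ → 1 ≤ m₂ → Nat.gcd m₁ m₂ = 1 →
      Nat.card {H : Subgroup (GrenhamGroup (n - 1)) // H.index = m₁ * m₂} =
        Nat.card {H : Subgroup (GrenhamGroup (n - 1)) // H.index = m₁} *
          Nat.card {H : Subgroup (GrenhamGroup (n - 1)) // H.index = m₂} :=
  subgroup_count_finite_and_multiplicative_general n
end
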